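/- arXiv:1907.06335 — 3 statements merged into one kernel-verified Lean document; each statement's English description precedes it below -/
import Mathlib

section
/- For all complex z not an integer multiple of π, cot(z) = 1/z + 2z · Σ_{n=1}^∞ 1/(z² − n²π²), where the series converges absolutely. -/
/-!
Substituting `x = z / π` turns this into Mathlib's Mittag-Leffler expansion
`π cot (π x) = 1 / x + ∑ (1 / (x - n) + 1 / (x + n))`; absolute convergence comes for free,
since unconditional summability in a finite-dimensional space is absolute.
-/

open Complex

lemma Complex.div_mem_integerComplement {z c : ℂ} (hc : c ≠ 0) (hz : ∀ n : ℤ, z ≠ n * c) :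
    z / c ∈ integerComplement := by
  rintro ⟨n, hn⟩
  exact hz n (by rw [hn, div_mul_cancel₀ z hc])

lemma Complex.cotTerm_div {z c : ℂ} (hc : c ≠ 0) (hz : z / c ∈ integerComplement) (n : ℕ) :
    cotTerm (z / c) n = 2 * c * z * (1 / (z ^ 2 - ((n : ℂ) + 1) ^ 2 * c ^ 2)) := by
  have hplus := integerComplement_add_ne_zero hz ((n : ℤ) + 1)
  have hminus := integerComplement_add_ne_zero hz (-((n : ℤ) + 1))
  push_cast at hplus hminus
  have hfactor : z ^ 2 - ((n : ℂ) + 1) ^ 2 * c ^ 2 =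
      c ^ 2 * ((z / c + (n + 1)) * (z / c - (n + 1))) := by
    field_simp
    ring
  rw [cotTerm_identity hz, hfactor]
  field_simp

/-- Partial fraction expansion of the cotangent: for `z` not an integer multiple of `π`,
`cot z = 1/z + 2z ∑_{n ≥ 1} 1/(z² - n²π²)`, the series converging absolutely. -/
theorem cot_partial_fractions (z : ℂ) (hz : ∀ n : ℤ, z ≠ (n : ℂ) * (Real.pi : ℂ)) :
    (Summable fun n : ℕ => ‖1 / (z ^ 2 - ((n : ℂ) + 1) ^ 2 * (Real.pi : ℂ) ^ 2)‖) ∧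
      Complex.cos z / Complex.sin z =
        1 / z + 2 * z * ∑' n : ℕ, 1 / (z ^ 2 - ((n : ℂ) + 1) ^ 2 * (Real.pi : ℂ) ^ 2) := by
  have hπ : (Real.pi : ℂ) ≠ 0 := ofReal_ne_zero.mpr Real.pi_ne_zero
  have hz0 : z ≠ 0 := by simpa using hz 0
  have hx := div_mem_integerComplement hπ hz
  have hterm := cotTerm_div hπ hx
  have hsum : Summable fun n : ℕ => 1 / (z ^ 2 - ((n : ℂ) + 1) ^ 2 * (Real.pi : ℂ) ^ 2) := by
    rw [← summable_mul_left_iff (by simp [hπ, hz0] : 2 * (Real.pi : ℂ) * z ≠ 0)]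
    simpa only [hterm] using summable_cotTerm hx
  refine ⟨summable_norm_iff.mpr hsum, ?_⟩
  have hrep := cot_series_rep' hx
  simp only [hterm, tsum_mul_left, mul_div_cancel₀ z hπ, Complex.cot, one_div_div] at hrep
  apply mul_left_cancel₀ hπ
  linear_combination hrep
end

section
/- For θ ∈ ℝ, the function t ↦ sech(πt/2)/2 is a probability density on ℝ whose characteristic function is E[e^{iθX}] = sech(θ) = 2/(e^θ + e^{−θ}). -/
/-!
Substituting `t = exp (π x)` turns the characteristic function at `θ` into `π⁻¹` times the
Mellin transform of `t ↦ (1 + t)⁻¹` at `s = 1/2 + iθ/π`. The substitution `t ↦ t / (1 + t)`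
identifies that Mellin transform with the Beta integral
`B(s, 1 - s) = Γ(s) Γ(1 - s) = π / sin (π s)`, and `sin (π/2 + iθ) = cosh θ`.
The total mass is the value at `θ = 0`.
-/

open MeasureTheory Complex Set

open scoped Real

theorem mellin_eq_integral_cexp_mul {E : Type*} [NormedAddCommGroup E] [NormedSpace ℂ E]
    (f : ℝ → E) (s : ℂ) :
    mellin f s = ∫ x : ℝ, cexp (s * x) • f (Real.exp x) := by
  rw [mellin, ← Real.range_exp, ← image_univ,
    integral_image_eq_integral_abs_deriv_smul MeasurableSet.univ
      (fun x _ => (Real.hasDerivAt_exp x).hasDerivWithinAt) Real.exp_injective.injOn,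
    Measure.restrict_univ]
  congr 1 with x
  have hcpow : ((Real.exp x : ℝ) : ℂ) ^ (s - 1) = cexp ((s - 1) * x) := by
    rw [cpow_def_of_ne_zero (by exact_mod_cast (Real.exp_pos x).ne'), ← ofReal_log
      (Real.exp_pos x).le, Real.log_exp, mul_comm]
  rw [abs_of_pos (Real.exp_pos x), hcpow, ← smul_assoc, ← coe_smul, smul_eq_mul, ofReal_exp,
    ← Complex.exp_add]
  ring_nf

theorem image_div_one_add_Ioi : (fun t : ℝ => t / (1 + t)) '' Ioi 0 = Ioo 0 1 := by
  ext x
  constructor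
  · rintro ⟨t, ht, rfl⟩
    have ht : 0 < t := ht
    exact ⟨by positivity, (div_lt_one (by positivity)).2 (by linarith)⟩
  · rintro ⟨hx0, hx1⟩
    refine ⟨x / (1 - x), div_pos hx0 (by linarith), ?_⟩
    field_simp
    ring

theorem Complex.betaIntegral_eq_mellin (u v : ℂ) :
    betaIntegral u v = mellin (fun t : ℝ => (((1 + t)⁻¹ : ℝ) : ℂ) ^ (u + v)) u := by
  have hderiv : ∀ t ∈ Ioi (0 : ℝ),
      HasDerivWithinAt (fun t : ℝ => t / (1 + t)) ((1 + t)⁻¹ ^ 2) (Ioi 0) t := by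
    intro t (ht : 0 < t)
    refine ((hasDerivAt_id t).div ((hasDerivAt_id t).const_add 1)
      (by positivity)).hasDerivWithinAt.congr_deriv ?_
    simp only [id]
    field_simp
    ring
  have hinj : InjOn (fun t : ℝ => t / (1 + t)) (Ioi 0) := by
    intro a (ha : 0 < a) b (hb : 0 < b) hab
    field_simp at hab
    linarith
  rw [betaIntegral, intervalIntegral.integral_of_le zero_le_one, integral_Ioc_eq_integral_Ioo,
    ← image_div_one_add_Ioi,
    integral_image_eq_integral_abs_deriv_smul measurableSet_Ioi hderiv hinj, mellin]
  refine setIntegral_congr_fun measurableSet_Ioi fun t (ht : 0 < t) => ?_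
  have hb : 0 < (1 + t)⁻¹ := by positivity
  have hsub : 1 - ((t / (1 + t) : ℝ) : ℂ) = (((1 + t)⁻¹ : ℝ) : ℂ) := by
    rw [← ofReal_one, ← ofReal_sub]
    congr 1
    field_simp
    ring
  have hb0 : (((1 + t)⁻¹ : ℝ) : ℂ) ≠ 0 := by exact_mod_cast hb.ne'
  rw [hsub, div_eq_mul_inv, ofReal_mul, mul_cpow_ofReal_nonneg ht.le hb.le,
    abs_of_pos (by positivity), ← coe_smul, smul_eq_mul, smul_eq_mul, ofReal_pow]
  rw [show u + v = 2 + (u - 1) + (v - 1) by ring, cpow_add _ _ hb0, cpow_add _ _ hb0, cpow_ofNat]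
  ring

theorem mellin_inv_one_add {s : ℂ} (hs0 : 0 < s.re) (hs1 : s.re < 1) :
    mellin (fun t : ℝ => (((1 + t)⁻¹ : ℝ) : ℂ)) s = π / sin (π * s) := by
  have h := betaIntegral_eq_mellin s (1 - s)
  simp_rw [add_sub_cancel, cpow_one] at h
  rw [← h, betaIntegral_eq_Gamma_mul_div _ _ hs0 (by simpa), add_sub_cancel, Gamma_one, div_one,
    Gamma_mul_Gamma_one_sub]

noncomputable def sechDensity (x : ℝ) : ℝ :=
  1 / (Real.exp (π * x / 2) + Real.exp (-(π * x / 2)))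

theorem sechDensity_eq_exp_div (x : ℝ) :
    sechDensity x = Real.exp (π * x / 2) / (1 + Real.exp (π * x)) := by
  rw [sechDensity, Real.exp_neg, show π * x = π * x / 2 + π * x / 2 by ring, Real.exp_add]
  field_simp
  ring_nf

theorem cexp_mul_inv_one_add_exp (θ y : ℝ) :
    cexp ((1 / 2 + θ / π * I) * ↑(π * y)) • (((1 + Real.exp (π * y))⁻¹ : ℝ) : ℂ) =
      cexp (θ * y * I) * sechDensity y := by
  have hexp : cexp ((1 / 2 + θ / π * I) * ↑(π * y)) =
      Real.exp (π * y / 2) * cexp (θ * y * I) := by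
    rw [ofReal_exp, ← Complex.exp_add]
    congr 1
    push_cast
    field_simp
  rw [hexp, sechDensity_eq_exp_div, smul_eq_mul]
  push_cast
  ring

theorem integral_cexp_mul_sechDensity (θ : ℝ) :
    ∫ x : ℝ, cexp (θ * x * I) * sechDensity x = ((Real.cosh θ)⁻¹ : ℝ) := by
  set s : ℂ := 1 / 2 + θ / π * I
  have hsin : sin (π * s) = Real.cosh θ := by
    rw [show (π : ℂ) * s = θ * I + π / 2 by simp only [s]; field_simp; ring,
      sin_add_pi_div_two, cos_mul_I, ofReal_cosh]
  have hmellin := mellin_inv_one_add (s := s) (by simp [s]) (by norm_num [s])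
  rw [mellin_eq_integral_cexp_mul, hsin] at hmellin
  have hscale := Measure.integral_comp_mul_left
    (fun x : ℝ => cexp (s * x) • (((1 + Real.exp x)⁻¹ : ℝ) : ℂ)) π
  simp only [s, cexp_mul_inv_one_add_exp] at hscale
  rw [hscale, hmellin, abs_of_pos (inv_pos.2 Real.pi_pos), real_smul]
  have : (π : ℂ) ≠ 0 := by exact_mod_cast Real.pi_pos.ne'
  push_cast
  field_simp

theorem integral_sechDensity : ∫ x, sechDensity x = 1 := by
  have h := integral_cexp_mul_sechDensity 0
  simp only [ofReal_zero, zero_mul, Complex.exp_zero, one_mul, Real.cosh_zero, inv_one] at h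
  exact_mod_cast h

/-- `t ↦ sech(πt/2)/2` is a probability density on `ℝ` whose characteristic function is
`θ ↦ sech θ = 2/(e^θ + e^{-θ})`. -/
theorem sech_density_char_fun :
    (∀ x : ℝ, 0 ≤ 1 / (Real.exp (Real.pi * x / 2) + Real.exp (-(Real.pi * x / 2)))) ∧
    (∫ x : ℝ, 1 / (Real.exp (Real.pi * x / 2) + Real.exp (-(Real.pi * x / 2))) = 1) ∧
    (∀ θ : ℝ,
      ∫ x : ℝ, Complex.exp (θ * x * I) *
          ((1 / (Real.exp (Real.pi * x / 2) + Real.exp (-(Real.pi * x / 2))) : ℝ) : ℂ) =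
        ((2 / (Real.exp θ + Real.exp (-θ)) : ℝ) : ℂ)) := by
  refine ⟨fun x => by positivity, integral_sechDensity, fun θ => ?_⟩
  rw [← inv_div, ← Real.cosh_eq]
  exact integral_cexp_mul_sechDensity θ
end

section
/- The parabolic region Ω = {x + iy ∈ ℂ : x > y² − 1} is contained in a wedge of arbitrarily small aperture: for every α > 0 there exist c ∈ ℝ and a rotation/translation T such that Ω ⊆ T(W_α), where W_α = {z ≠ 0 : 0 < Arg(z) < α}. -/
open Complex Set
open scoped Real

/-
For `t > 0` the parabola `x > y² − 1`, shifted right by `1 + t⁻²`, lies in the sector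
`|y| < t x`: by AM–GM, `t y² + t⁻¹ ≥ 2|y|`. Hence, with `t = tan β`, the shifted parabola lies
in the sector `|arg z| < β`, and rotating it by `β` puts it inside `0 < arg z < 2β ≤ α`.
-/

theorem abs_lt_mul_add_of_sq_sub_one_lt {t x y : ℝ} (ht : 0 < t) (h : y ^ 2 - 1 < x) :
    |y| < t * (x + (1 + t⁻¹ ^ 2)) := by
  have amgm : 2 * |y| ≤ t * y ^ 2 + t⁻¹ := by
    have hsq : t * (|y| - t⁻¹) ^ 2 = t * y ^ 2 + t⁻¹ - 2 * |y| := by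
      linear_combination t * sq_abs y + (t⁻¹ - 2 * |y|) * mul_inv_cancel₀ ht.ne'
    linarith [mul_nonneg ht.le (sq_nonneg (|y| - t⁻¹))]
  have hshift : t * t⁻¹ ^ 2 = t⁻¹ := by field_simp
  calc |y| ≤ 2 * |y| := by linarith [abs_nonneg y]
    _ ≤ t * y ^ 2 + t⁻¹ := amgm
    _ < t * (x + (1 + t⁻¹ ^ 2)) := by nlinarith [mul_lt_mul_of_pos_left h ht]

theorem abs_arg_lt_of_abs_im_lt_tan_mul_re {β : ℝ} (hβ₀ : 0 < β) (hβ : β < π / 2) {v : ℂ}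
    (hv : |v.im| < Real.tan β * v.re) : |arg v| < β := by
  have htan : 0 < Real.tan β := Real.tan_pos_of_pos_of_lt_pi_div_two hβ₀ hβ
  have hre : 0 < v.re := pos_of_mul_pos_right ((abs_nonneg _).trans_lt hv) htan.le
  have hslope : |v.im / v.re| < Real.tan β := by
    rwa [abs_div, abs_of_pos hre, div_lt_iff₀ hre]
  have harg : arg v = Real.arctan (v.im / v.re) := by
    have := abs_lt.1 (abs_arg_lt_pi_div_two_iff.2 (Or.inl hre))
    rw [← tan_arg, Real.arctan_tan this.1 this.2]
  have hβ_eq : β = Real.arctan (Real.tan β) := (Real.arctan_tan (by linarith) hβ).symm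
  rw [harg, hβ_eq, abs_lt, ← Real.arctan_neg]
  exact ⟨Real.arctan_strictMono (abs_lt.1 hslope).1, Real.arctan_strictMono (abs_lt.1 hslope).2⟩

theorem arg_exp_mul_I_mul {θ : ℝ} (hθ : θ ∈ Ioc (-π) π) {v : ℂ} (hv : v ≠ 0)
    (h : θ + arg v ∈ Ioc (-π) π) : arg (exp (θ * I) * v) = θ + arg v := by
  have hexp : arg (exp (θ * I)) = θ := by
    rw [arg_exp_mul_I, toIocMod_eq_self]
    simpa [two_mul, ← sub_eq_add_neg] using hθ
  rw [arg_mul (exp_ne_zero _) hv, hexp]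
  rwa [hexp]

/-- The parabolic region `{x + iy : x > y² − 1}` is contained in the image, under a
rotation and a translation, of the wedge `W_α = {z ≠ 0 : 0 < Arg z < α}`, for every
aperture `α > 0`. -/
theorem parabola_in_small_wedge :
    ∀ α : ℝ, 0 < α →
      ∃ w c : ℂ, ‖w‖ = 1 ∧
        {z : ℂ | z.re > z.im ^ 2 - 1} ⊆
          (fun z => w * z + c) '' {z : ℂ | z ≠ 0 ∧ 0 < Complex.arg z ∧ Complex.arg z < α} := by
  intro α hα
  set β := min (α / 2) 1
  have hβ₀ : 0 < β := lt_min (half_pos hα) one_pos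
  have hβα : 2 * β ≤ α := by linarith [min_le_left (α / 2) 1]
  have hβπ : β < π / 2 := by linarith [min_le_right (α / 2) 1, Real.pi_gt_three]
  set R : ℂ := ((1 + (Real.tan β)⁻¹ ^ 2 : ℝ) : ℂ)
  refine ⟨exp (↑(-β) * I), -R, norm_exp_ofReal_mul_I _, fun z hz => ?_⟩
  have hslope : |(z + R).im| < Real.tan β * (z + R).re := by
    simpa only [R, add_re, add_im, ofReal_re, ofReal_im, add_zero] using
      abs_lt_mul_add_of_sq_sub_one_lt (Real.tan_pos_of_pos_of_lt_pi_div_two hβ₀ hβπ) hz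
  have hne : z + R ≠ 0 := by
    rintro h
    simp [h] at hslope
  obtain ⟨hlo, hhi⟩ := abs_lt.1 (abs_arg_lt_of_abs_im_lt_tan_mul_re hβ₀ hβπ hslope)
  have hrot := arg_exp_mul_I_mul (θ := β) ⟨by linarith, by linarith⟩ hne
    ⟨by linarith, by linarith⟩
  refine ⟨exp (β * I) * (z + R), ⟨mul_ne_zero (exp_ne_zero _) hne, ?_, ?_⟩, ?_⟩
  · rw [hrot]; linarith
  · rw [hrot]; linarith
  · dsimp only
    rw [← mul_assoc, ← exp_add, ofReal_neg, neg_mul, neg_add_cancel, exp_zero, one_mul]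
    ring
end
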